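/- Fix a channel coefficient h ∈ ℂ with h ≠ 0. If a nonzero filter f ∈ ℂ^B is a global minimizer of the zeroth-order symbol-estimate MSE, i.e. M_dc(f) ≤ M_dc(g) for every nonzero g ∈ ℂ^B, then f necessarily satisfies the condition φ(f) = 1 + σw²/(σx²·|h|²). (The necessary condition that every optimal channel-estimating filter must satisfy.) -/
import Mathlib


open MeasureTheory

/-- `φ(f) = fᴴ x = Σᵢ conj(fᵢ)·xᵢ`. -/
noncomputable def phi {B : ℕ} (x f : Fin B → ℂ) : ℂ :=
  ∑ i, (starRingEnd ℂ) (f i) * x i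

/-- Squared Euclidean norm `‖f‖² = Σᵢ |fᵢ|²`. -/
noncomputable def nsq {B : ℕ} (f : Fin B → ℂ) : ℝ :=
  ∑ i, Complex.normSq (f i)

/-- Zeroth-order symbol-estimate MSE of the ZF equalizer, deterministic channel `h`. -/
noncomputable def Mdc {B : ℕ} (σx2 σw2 : ℝ) (h : ℂ) (x f : Fin B → ℂ) : ℝ :=
  (σx2 * (Complex.normSq h * Complex.normSq (phi x f - 1) + σw2 * nsq f) + σw2) /
    (Complex.normSq h * Complex.normSq (phi x f) + σw2 * nsq f)

lemma phi_smul {B : ℕ} (x f : Fin B → ℂ) (t : ℂ) :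
    phi x (fun i => t * f i) = (starRingEnd ℂ) t * phi x f := by
  simp [phi, Finset.mul_sum, mul_assoc]

lemma nsq_smul {B : ℕ} (f : Fin B → ℂ) (t : ℂ) :
    nsq (fun i => t * f i) = Complex.normSq t * nsq f := by
  simp [nsq, Complex.normSq_mul, Finset.mul_sum]

lemma nsq_pos {B : ℕ} {f : Fin B → ℂ} (hf : f ≠ 0) : 0 < nsq f := by
  rcases Function.ne_iff.mp hf with ⟨i, hi⟩
  exact Finset.sum_pos' (fun j _ => Complex.normSq_nonneg _)
    ⟨i, Finset.mem_univ i, Complex.normSq_pos.mpr hi⟩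

lemma phi_self {B : ℕ} (x : Fin B → ℂ) : phi x x = (nsq x : ℂ) := by
  unfold phi nsq
  push_cast
  exact Finset.sum_congr rfl fun i _ => (Complex.normSq_eq_conj_mul_self).symm

lemma smul_fun_ne_zero {B : ℕ} {f : Fin B → ℂ} {t : ℂ} (ht : t ≠ 0) (hf : f ≠ 0) :
    (fun i => t * f i) ≠ 0 := by
  rcases Function.ne_iff.mp hf with ⟨i, hi⟩
  intro hg
  have := congrFun hg i
  simp only [Pi.zero_apply, mul_eq_zero] at this
  tauto

/-- Necessary condition: any global minimizer `f` of `[MSE_x^dc(ZF)]₀` satisfies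
`fᴴx = 1 + σw²/(σx²·|h|²)`. -/
theorem necessary_condition_optimal_filter_dc
    (B : ℕ) (hB : 1 ≤ B) (x : Fin B → ℂ) (hx : x ≠ 0)
    (σx2 σw2 : ℝ) (hσx : 0 < σx2) (hσw : 0 < σw2)
    (h : ℂ) (hh : h ≠ 0)
    (f : Fin B → ℂ) (hf : f ≠ 0)
    (hfopt : ∀ g : Fin B → ℂ, g ≠ 0 → Mdc σx2 σw2 h x f ≤ Mdc σx2 σw2 h x g) :
    phi x f = ((1 + σw2 / (σx2 * Complex.normSq h) : ℝ) : ℂ) := by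
  obtain ⟨P, hPdef⟩ : ∃ P, Complex.normSq h = P := ⟨_, rfl⟩
  have hP : 0 < P := hPdef ▸ Complex.normSq_pos.mpr hh
  have hσxP : 0 < σx2 * P := mul_pos hσx hP
  obtain ⟨A, hAdef⟩ : ∃ A, σx2 * P + σw2 = A := ⟨_, rfl⟩
  have hApos : 0 < A := by rw [← hAdef]; positivity
  obtain ⟨r, hrdef⟩ : ∃ r, A / (σx2 * P) = r := ⟨_, rfl⟩
  have hr2 : σx2 * P * r = A := by
    rw [← hrdef]; field_simp
  have hrpos : 0 < r := by rw [← hrdef]; exact div_pos hApos hσxP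
  obtain ⟨φ, hφdef⟩ : ∃ φ, phi x f = φ := ⟨_, rfl⟩
  obtain ⟨n, hndef⟩ : ∃ n, nsq f = n := ⟨_, rfl⟩
  have hn : 0 < n := hndef ▸ nsq_pos hf
  obtain ⟨a, hadef⟩ : ∃ a, φ.re = a := ⟨_, rfl⟩
  obtain ⟨b, hbdef⟩ : ∃ b, φ.im = b := ⟨_, rfl⟩
  obtain ⟨N, hNdef⟩ : ∃ N, Complex.normSq φ = N := ⟨_, rfl⟩
  have hNnn : 0 ≤ N := hNdef ▸ Complex.normSq_nonneg φ
  have hN : N = a ^ 2 + b ^ 2 := by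
    rw [← hNdef, ← hadef, ← hbdef, Complex.normSq_apply]; ring
  have hNφ1 : Complex.normSq (φ - 1) = N - 2 * a + 1 := by
    rw [hN, ← hadef, ← hbdef]
    simp [Complex.normSq_apply, Complex.sub_re, Complex.sub_im]
    ring
  obtain ⟨K, hKdef⟩ : ∃ K, A - 2 * (σx2 * P) * a = K := ⟨_, rfl⟩
  obtain ⟨D, hDdef⟩ : ∃ D, P * N + σw2 * n = D := ⟨_, rfl⟩
  have hD : 0 < D := by
    rw [← hDdef]
    exact add_pos_of_nonneg_of_pos (mul_nonneg hP.le hNnn) (mul_pos hσw hn)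
  have hMf : Mdc σx2 σw2 h x f = σx2 + K / D := by
    unfold Mdc
    rw [hPdef, hφdef, hndef, hNφ1, hNdef, hDdef]
    have hnum : σx2 * (P * (N - 2 * a + 1) + σw2 * n) + σw2 = σx2 * D + K := by
      rw [← hDdef, ← hKdef, ← hAdef]; ring
    rw [hnum, add_div, mul_div_cancel_right₀ _ hD.ne']
  -- general fact: any g with phi x g = r has Mdc g = σx2 - A/(P*r^2+σw2*nsq g)
  have hMg_gen : ∀ g : Fin B → ℂ, phi x g = (r : ℂ) →
      Mdc σx2 σw2 h x g = σx2 - A / (P * r ^ 2 + σw2 * nsq g) := by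
    intro g hg
    have hgne : g ≠ 0 := by
      intro h0
      apply hrpos.ne'
      have h1 : (r : ℂ) = 0 := by rw [← hg, h0]; simp [phi]
      exact_mod_cast h1
    have hDeng : 0 < P * r ^ 2 + σw2 * nsq g := by
      have h1 : 0 < P * r ^ 2 := by positivity
      have h2 := mul_pos hσw (nsq_pos hgne)
      linarith
    unfold Mdc
    rw [hPdef, hg]
    have h1 : Complex.normSq ((r : ℂ) - 1) = (r - 1) ^ 2 := by
      rw [show ((r : ℂ) - 1) = ((r - 1 : ℝ) : ℂ) by push_cast; ring,
        Complex.normSq_ofReal]; ring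
    have h2 : Complex.normSq ((r : ℂ)) = r ^ 2 := by
      rw [Complex.normSq_ofReal]; ring
    rw [h1, h2]
    have hnum : σx2 * (P * (r - 1) ^ 2 + σw2 * nsq g) + σw2
        = σx2 * (P * r ^ 2 + σw2 * nsq g) - A := by
      linear_combination (-2 : ℝ) * hr2 + hAdef
    rw [hnum, sub_div, mul_div_cancel_right₀ _ hDeng.ne']
  by_cases hφ0 : φ = 0
  · -- impossible: the scaled matched filter does strictly better
    exfalso
    obtain ⟨X, hXdef⟩ : ∃ X, nsq x = X := ⟨_, rfl⟩
    have hX : 0 < X := hXdef ▸ nsq_pos hx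
    have ht : ((r / X : ℝ) : ℂ) ≠ 0 :=
      Complex.ofReal_ne_zero.mpr (div_pos hrpos hX).ne'
    have hphig : phi x (fun i => ((r / X : ℝ) : ℂ) * x i) = (r : ℂ) := by
      rw [phi_smul, phi_self, Complex.conj_ofReal, hXdef, ← Complex.ofReal_mul,
        div_mul_cancel₀ _ hX.ne']
    have hnsqg : nsq (fun i => ((r / X : ℝ) : ℂ) * x i) = r ^ 2 / X := by
      rw [nsq_smul, Complex.normSq_ofReal, hXdef]
      field_simp
    have hMg := hMg_gen _ hphig
    rw [hnsqg] at hMg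
    have hle := hfopt _ (smul_fun_ne_zero ht hx)
    rw [hMf, hMg] at hle
    have ha0 : a = 0 := by rw [← hadef, hφ0]; simp
    have hKA : K = A := by rw [← hKdef, ha0]; ring
    have hDeng : 0 < P * r ^ 2 + σw2 * (r ^ 2 / X) := by positivity
    have h1 : 0 < A / D := div_pos hApos hD
    have h2 : 0 < A / (P * r ^ 2 + σw2 * (r ^ 2 / X)) := div_pos hApos hDeng
    rw [hKA] at hle
    linarith
  · -- main case: compare with the optimally rescaled-and-rotated f
    have hNpos : 0 < N := by rw [← hNdef]; exact Complex.normSq_pos.mpr hφ0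
    have ht : ((r / N : ℝ) : ℂ) * φ ≠ 0 :=
      mul_ne_zero (Complex.ofReal_ne_zero.mpr (div_pos hrpos hNpos).ne') hφ0
    have hfne' : (fun i => (((r / N : ℝ) : ℂ) * φ) * f i) ≠ 0 :=
      smul_fun_ne_zero ht hf
    have hphig : phi x (fun i => (((r / N : ℝ) : ℂ) * φ) * f i) = (r : ℂ) := by
      rw [phi_smul, hφdef, map_mul, Complex.conj_ofReal, mul_assoc,
        show (starRingEnd ℂ) φ * φ = ((N : ℝ) : ℂ) by
          rw [← hNdef]; exact (Complex.normSq_eq_conj_mul_self).symm,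
        ← Complex.ofReal_mul, div_mul_cancel₀ _ hNpos.ne']
    have hnsqg : nsq (fun i => (((r / N : ℝ) : ℂ) * φ) * f i) = r ^ 2 / N * n := by
      rw [nsq_smul, hndef, Complex.normSq_mul, Complex.normSq_ofReal, hNdef]
      field_simp
    have hMg := hMg_gen _ hphig
    rw [hnsqg] at hMg
    have hle := hfopt _ hfne'
    rw [hMf, hMg] at hle
    have hDeng : P * r ^ 2 + σw2 * (r ^ 2 / N * n) = r ^ 2 / N * D := by
      rw [← hDdef]; field_simp
    rw [hDeng] at hle
    have hE : 0 < r ^ 2 / N * D := by positivity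
    have h4 : K / D ≤ -A / (r ^ 2 / N * D) := by
      rw [neg_div]; linarith
    have h5 : K * (r ^ 2 / N * D) ≤ -A * D := (div_le_div_iff₀ hD hE).mp h4
    have h5' : (K * r ^ 2 / N) * D ≤ (-A) * D := by
      calc (K * r ^ 2 / N) * D = K * (r ^ 2 / N * D) := by ring
        _ ≤ -A * D := h5
    have h6 : K * r ^ 2 / N ≤ -A := le_of_mul_le_mul_right h5' hD
    have h7 : K * r ^ 2 ≤ -A * N := by
      rwa [div_le_iff₀ hNpos] at h6
    have h8 : K * A ^ 2 ≤ -A * N * (σx2 * P) ^ 2 := by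
      calc K * A ^ 2 = (σx2 * P) ^ 2 * (K * r ^ 2) := by rw [← hr2]; ring
        _ ≤ (σx2 * P) ^ 2 * (-A * N) := mul_le_mul_of_nonneg_left h7 (sq_nonneg _)
        _ = -A * N * (σx2 * P) ^ 2 := by ring
    have h9 : K * A ≤ -N * (σx2 * P) ^ 2 := by
      have h9' : (K * A) * A ≤ (-N * (σx2 * P) ^ 2) * A := by
        calc (K * A) * A = K * A ^ 2 := by ring
          _ ≤ -A * N * (σx2 * P) ^ 2 := h8
          _ = (-N * (σx2 * P) ^ 2) * A := by ring
      exact le_of_mul_le_mul_right h9' hApos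
    have key : (A - σx2 * P * a) ^ 2 + (σx2 * P * b) ^ 2 ≤ 0 := by
      calc (A - σx2 * P * a) ^ 2 + (σx2 * P * b) ^ 2
          = K * A + N * (σx2 * P) ^ 2 := by rw [← hKdef, hN]; ring
        _ ≤ 0 := by linarith
    have ha : σx2 * P * a = A := by
      have hs2 : (A - σx2 * P * a) ^ 2 = 0 :=
        le_antisymm (by linarith [sq_nonneg (σx2 * P * b)]) (sq_nonneg _)
      have hs3 := pow_eq_zero_iff (n := 2) (by norm_num) |>.mp hs2
      linarith [hs3]
    have hb : b = 0 := by
      have hb2 : (σx2 * P * b) ^ 2 = 0 :=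
        le_antisymm (by linarith [sq_nonneg (A - σx2 * P * a)]) (sq_nonneg _)
      have hb3 := pow_eq_zero_iff (n := 2) (by norm_num) |>.mp hb2
      rcases mul_eq_zero.mp hb3 with h' | h'
      · exact absurd h' hσxP.ne'
      · exact h'
    have hare : a = 1 + σw2 / (σx2 * P) := by
      rw [← hAdef] at ha
      field_simp
      linarith
    rw [hPdef, hφdef]
    apply Complex.ext
    · rw [hadef, Complex.ofReal_re, hare]
    · rw [hbdef, Complex.ofReal_im, hb]
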